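/- arXiv:1803.07448 — 2 statements merged into one kernel-verified Lean document; each statement's English description precedes it below -/
import Mathlib

section
/- Let A and B be graded vector spaces over a field with degree-one maps c' : A_i → A_{i+1} and c'' : B_i → B_{i+1}. Suppose there exist integers p, q such that A_i = 0 for all i ∉ [p, p+2], and c'' : B_i → B_{i+1} is surjective for all i ∈ [q, q+2]. Define c = c' ⊗ id + id ⊗ c'' on the graded tensor product C_• = A_• ⊗ B_• (where C_n = ⊕_{i+j=n} A_i ⊗ B_j). Then c maps C_{p+q+2} onto C_{p+q+3}. -/
/-!
STATEMENT 0: Graded vector spaces `A`, `B` over a field `𝕜` with degree-one maps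
`c' : A i → A (i+1)`, `c'' : B i → B (i+1)`.  If `A i = 0` for `i ∉ [p, p+2]` and
`c''` is surjective in degrees `q, q+1, q+2`, then the operator
`c = c' ⊗ id + id ⊗ c''` on the graded tensor product `C n = ⨁_{i+j=n} A i ⊗ B j`
(realized as `⨁ i, A i ⊗ B (n - i)`) maps `C (p+q+2)` onto `C (p+q+3)`.
-/

open scoped TensorProduct DirectSum

theorem stmt0 {𝕜 : Type*} [Field 𝕜]
    (A B : ℤ → Type*)
    [∀ i, AddCommGroup (A i)] [∀ i, Module 𝕜 (A i)]
    [∀ i, AddCommGroup (B i)] [∀ i, Module 𝕜 (B i)]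
    (c' : ∀ i, A i →ₗ[𝕜] A (i + 1))
    (c'' : ∀ i, B i →ₗ[𝕜] B (i + 1))
    (p q : ℤ)
    (hA : ∀ i, (i < p ∨ p + 2 < i) → ∀ a : A i, a = 0)
    (hB : ∀ i, q ≤ i → i ≤ q + 2 → Function.Surjective (c'' i))
    -- `cC n` is the operator `c' ⊗ id + id ⊗ c''` on
    -- `C n = ⨁ i, A i ⊗ B (n - i)`, specified componentwise below.
    (cC : ∀ n : ℤ,
      (⨁ i : ℤ, (A i ⊗[𝕜] B (n - i))) →ₗ[𝕜] (⨁ i : ℤ, (A i ⊗[𝕜] B (n + 1 - i))))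
    (hcC : ∀ (n i : ℤ) (a : A i) (b : B (n - i)),
      cC n (DirectSum.lof 𝕜 ℤ (fun i => A i ⊗[𝕜] B (n - i)) i (a ⊗ₜ b)) =
        DirectSum.lof 𝕜 ℤ (fun i => A i ⊗[𝕜] B (n + 1 - i)) (i + 1)
          ((c' i a) ⊗ₜ (cast (congrArg B (by omega : n - i = n + 1 - (i + 1))) b)) +
        DirectSum.lof 𝕜 ℤ (fun i => A i ⊗[𝕜] B (n + 1 - i)) i
          (a ⊗ₜ (cast (congrArg B (by omega : n - i + 1 = n + 1 - i)) (c'' (n - i) b)))) :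
    Function.Surjective (cC (p + q + 2)) := by
  set n : ℤ := p + q + 2 with hn
  have key : ∀ (k : ℕ) (i : ℤ), p + 3 - i ≤ (k : ℤ) →
      ∀ (a : A i) (b : B (n + 1 - i)),
      DirectSum.lof 𝕜 ℤ (fun j => A j ⊗[𝕜] B (n + 1 - j)) i (a ⊗ₜ b)
        ∈ LinearMap.range (cC n) := by
    intro k
    induction k with
    | zero =>
      intro i hi a b
      have ha : a = 0 := hA i (by omega) a
      simp [ha]
    | succ k ih =>
      intro i hi a b
      by_cases h1 : i < p ∨ p + 2 < i
      · have ha : a = 0 := hA i h1 a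
        simp [ha]
      · push_neg at h1
        obtain ⟨hp1, hp2⟩ := h1
        obtain ⟨b', hb'⟩ := hB (n - i) (by omega) (by omega)
          (cast (congrArg B (by omega : n + 1 - i = n - i + 1)) b)
        have hc := hcC n i a b'
        have hsec : cast (congrArg B (by omega : n - i + 1 = n + 1 - i))
            (c'' (n - i) b') = b := by
          rw [hb', cast_cast]; exact cast_eq _ b
        have heq : DirectSum.lof 𝕜 ℤ (fun j => A j ⊗[𝕜] B (n + 1 - j)) i (a ⊗ₜ b)
            = cC n (DirectSum.lof 𝕜 ℤ (fun j => A j ⊗[𝕜] B (n - j)) i (a ⊗ₜ b'))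
              - DirectSum.lof 𝕜 ℤ (fun j => A j ⊗[𝕜] B (n + 1 - j)) (i + 1)
                  ((c' i a) ⊗ₜ
                    (cast (congrArg B (by omega : n - i = n + 1 - (i + 1))) b')) := by
          rw [hc, hsec]; abel
        rw [heq]
        exact sub_mem ⟨_, rfl⟩ (ih (i + 1) (by omega) _ _)
  intro x
  suffices h : x ∈ LinearMap.range (cC n) by exact h
  induction x using DirectSum.induction_on with
  | zero => exact zero_mem _
  | of i t =>
    induction t using TensorProduct.induction_on with
    | zero => simp
    | tmul a b =>
      have := key (p + 3 - i).toNat i (by omega) a b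
      simpa [DirectSum.lof_eq_of] using this
    | add s t hs ht =>
      rw [map_add]
      exact add_mem hs ht
  | add x y hx hy => exact add_mem hx hy
end

section
/- Let Y = ℙ¹ × ℙ¹, D the diagonal and D' = 2E_1 + E_2 (where E_1, E_2 are the rulings). Consider the cup product actions c_1(O(D)) and c_1(O(D')) on H²(Y, ℚ) → H⁴(Y, ℚ). Identifying H²(Y, ℚ) ≅ ℚ² with basis dual to (E_1, E_2) and H⁴(Y, ℚ) ≅ ℚ, the map c_1(O(D))∪ has matrix (1, 1) and c_1(O(D'))∪ has matrix (1, 2); the images of the induced maps on H₄(X_1) → H₂(X_1) for the glued variety X_1 = Y ∪_D Y have cokernels of dimension 2 and 1 respectively, hence these dimensions differ. -/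
/-!
STATEMENT 12: On `Y = ℙ¹ × ℙ¹` with `D` the diagonal and `D' = 2E₁ + E₂`, the
cup product maps `c₁(O(D))∪, c₁(O(D'))∪ : H²(Y,ℚ) → H⁴(Y,ℚ)` have matrices
`(1,1)` and `(1,2)` in the basis dual to `(E₁,E₂)`; for the glued variety
`X₁ = Y ∪_D Y` the induced maps `H₄(X₁) → H₂(X₁)` (on `H₄(X₁) ≅ ℚ²` with one
class per component, into `Gr^W₂H₂(X₁) ≅ coker(H⁰(D)(−1) → H²(Y) ⊕ H²(Y))`)
have cokernels of dimensions `2` and `1` respectively — hence these dimensions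
differ.

Formalization: `H²(Y,ℚ) ≅ ℚ²` with basis dual to `(E₁,E₂)`, `H⁴(Y,ℚ) ≅ ℚ`;
`Gr^W₂ H₂(X₁) ≅ (ℚ² × ℚ²)/⟨((1,1),(1,1))⟩` (the relation is the image of the
Gysin map `H⁰(D) → H²(Y) ⊕ H²(Y)`, `1 ↦ ([D],[D]) = ((1,1),(1,1))`); the map
induced by `c₁` sends the fundamental class of each component to the class of
the corresponding divisor, `(1,1)` for `O(D)` and `(2,1)` for `O(D')`.
-/

/-- The relation submodule `⟨(([D],[D]))⟩ = ⟨((1,1),(1,1))⟩` inside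
`H²(Y) ⊕ H²(Y)`. -/
noncomputable def glueRelSub : Submodule ℚ ((Fin 2 → ℚ) × (Fin 2 → ℚ)) :=
  Submodule.span ℚ {((![1, 1], ![1, 1]) : (Fin 2 → ℚ) × (Fin 2 → ℚ))}

/-- `Gr^W₂ H₂(X₁, ℚ)` for the glued surface `X₁ = Y ∪_D Y`. -/
noncomputable def GrW2H2 := ((Fin 2 → ℚ) × (Fin 2 → ℚ)) ⧸ glueRelSub

noncomputable instance : AddCommGroup GrW2H2 :=
  inferInstanceAs (AddCommGroup (_ ⧸ glueRelSub))
noncomputable instance : Module ℚ GrW2H2 :=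
  inferInstanceAs (Module ℚ (_ ⧸ glueRelSub))

/-- The action of `c₁` of a line bundle restricting to class `(a,b)` on each
copy of `Y`: `H₄(X₁) ≅ ℚ × ℚ → Gr^W₂ H₂(X₁)`. -/
noncomputable def capMap (v : Fin 2 → ℚ) : (ℚ × ℚ) →ₗ[ℚ] GrW2H2 :=
  glueRelSub.mkQ.comp
    (LinearMap.prodMap (LinearMap.toSpanSingleton ℚ (Fin 2 → ℚ) v)
      (LinearMap.toSpanSingleton ℚ (Fin 2 → ℚ) v))

namespace Stmt12Aux

abbrev Mod := (Fin 2 → ℚ) × (Fin 2 → ℚ)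

noncomputable def Fv (v : Fin 2 → ℚ) : (ℚ × ℚ) →ₗ[ℚ] Mod :=
  LinearMap.prodMap (LinearMap.toSpanSingleton ℚ (Fin 2 → ℚ) v)
    (LinearMap.toSpanSingleton ℚ (Fin 2 → ℚ) v)

lemma Fv_apply (v : Fin 2 → ℚ) (s t : ℚ) : Fv v (s, t) = (s • v, t • v) := rfl

noncomputable def Tv (v : Fin 2 → ℚ) : Submodule ℚ Mod :=
  glueRelSub ⊔ LinearMap.range (Fv v)

/-- `GrW2H2 ⧸ range (capMap v) ≃ Mod ⧸ Tv v`. -/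
noncomputable def quotEquiv (v : Fin 2 → ℚ) :
    (GrW2H2 ⧸ LinearMap.range (capMap v)) ≃ₗ[ℚ] (Mod ⧸ Tv v) :=
  (Submodule.quotEquivOfEq _ _ (by
      show LinearMap.range (glueRelSub.mkQ.comp (Fv v)) = _
      rw [LinearMap.range_comp])).trans
    (Submodule.quotientQuotientEquivQuotientSup glueRelSub (LinearMap.range (Fv v)))

noncomputable def g1 : Mod →ₗ[ℚ] (Fin 2 → ℚ) where
  toFun x := ![x.1 0 - x.1 1, x.2 0 - x.2 1]
  map_add' x y := by funext i; fin_cases i <;> simp <;> ring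
  map_smul' c x := by funext i; fin_cases i <;> simp <;> ring

noncomputable def g2 : Mod →ₗ[ℚ] ℚ where
  toFun x := x.1 0 - 2 * x.1 1 - x.2 0 + 2 * x.2 1
  map_add' x y := by simp; ring
  map_smul' c x := by simp; ring

lemma rel_mem : ((![1,1], ![1,1]) : Mod) ∈ glueRelSub :=
  Submodule.subset_span rfl

lemma T1_eq : Tv ![1,1] = LinearMap.ker g1 := by
  apply le_antisymm
  · apply sup_le
    · rw [glueRelSub, Submodule.span_le, Set.singleton_subset_iff]
      show g1 (![1,1], ![1,1]) = 0
      funext i; fin_cases i <;> simp [g1]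
    · rintro x ⟨⟨s, t⟩, rfl⟩
      show g1 (s • ![1,1], t • ![1,1]) = 0
      funext i; fin_cases i <;> simp [g1]
  · intro x hx
    have h0 : x.1 0 - x.1 1 = 0 := congrFun hx 0
    have h1 : x.2 0 - x.2 1 = 0 := congrFun hx 1
    refine Submodule.mem_sup.mpr ⟨0, Submodule.zero_mem _, x, ⟨(x.1 0, x.2 0), ?_⟩, by simp⟩
    rw [Fv_apply]
    refine Prod.ext (funext fun i => ?_) (funext fun i => ?_) <;>
      fin_cases i <;> simp <;> linarith

lemma T2_eq : Tv ![2,1] = LinearMap.ker g2 := by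
  apply le_antisymm
  · apply sup_le
    · rw [glueRelSub, Submodule.span_le, Set.singleton_subset_iff]
      show g2 (![1,1], ![1,1]) = 0
      simp [g2]
    · rintro x ⟨⟨s, t⟩, rfl⟩
      show g2 (s • ![2,1], t • ![2,1]) = 0
      simp [g2]; ring
  · intro x hx
    have h : x.1 0 - 2 * x.1 1 - x.2 0 + 2 * x.2 1 = 0 := hx
    refine Submodule.mem_sup.mpr
      ⟨(2 * x.1 1 - x.1 0) • (![1,1], ![1,1]), Submodule.smul_mem _ _ rel_mem,
       Fv ![2,1] (x.1 0 - x.1 1, x.2 1 - 2 * x.1 1 + x.1 0), LinearMap.mem_range_self _ _, ?_⟩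
    rw [Fv_apply]
    refine Prod.ext (funext fun i => ?_) (funext fun i => ?_) <;>
      fin_cases i <;> simp <;> linarith

lemma g1_surj : Function.Surjective g1 := by
  intro y
  refine ⟨(![y 0, 0], ![y 1, 0]), ?_⟩
  funext i; fin_cases i <;> simp [g1]

lemma g2_surj : Function.Surjective g2 := by
  intro y
  exact ⟨(![y, 0], 0), by simp [g2]⟩

end Stmt12Aux

open Stmt12Aux in
theorem stmt12 :
    -- `c₁(O(D))∪ : H² → H⁴` has matrix `(1,1)`, `c₁(O(D'))∪` has matrix `(1,2)`
    (∀ x : Fin 2 → ℚ, dotProduct ![1, 1] x = x 0 + x 1) ∧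
    (∀ x : Fin 2 → ℚ, dotProduct ![1, 2] x = x 0 + 2 * x 1) ∧
    -- the cokernels of the induced maps `H₄(X₁) → H₂(X₁)` have dims 2 resp. 1
    Module.finrank ℚ (GrW2H2 ⧸ LinearMap.range (capMap ![1, 1])) = 2 ∧
    Module.finrank ℚ (GrW2H2 ⧸ LinearMap.range (capMap ![2, 1])) = 1 ∧
    -- hence the Lyubeznik-relevant dimensions depend on the embedding
    Module.finrank ℚ (GrW2H2 ⧸ LinearMap.range (capMap ![1, 1])) ≠
      Module.finrank ℚ (GrW2H2 ⧸ LinearMap.range (capMap ![2, 1])) := by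
  have e1 : (GrW2H2 ⧸ LinearMap.range (capMap ![1, 1])) ≃ₗ[ℚ] (Fin 2 → ℚ) :=
    ((quotEquiv ![1,1]).trans (Submodule.quotEquivOfEq _ _ T1_eq)).trans
      (g1.quotKerEquivOfSurjective g1_surj)
  have e2 : (GrW2H2 ⧸ LinearMap.range (capMap ![2, 1])) ≃ₗ[ℚ] ℚ :=
    ((quotEquiv ![2,1]).trans (Submodule.quotEquivOfEq _ _ T2_eq)).trans
      (g2.quotKerEquivOfSurjective g2_surj)
  have h1 : Module.finrank ℚ (GrW2H2 ⧸ LinearMap.range (capMap ![1, 1])) = 2 := by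
    rw [e1.finrank_eq]; simp
  have h2 : Module.finrank ℚ (GrW2H2 ⧸ LinearMap.range (capMap ![2, 1])) = 1 := by
    rw [e2.finrank_eq]; simp
  refine ⟨fun x => by simp [dotProduct, Fin.sum_univ_two],
    fun x => by simp [dotProduct, Fin.sum_univ_two], h1, h2, by omega⟩
end
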